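/- Let (a_i)_{i≥0} be a sequence of nonnegative real numbers and fix an integer k ≥ 1. For i ≥ 0 set A_i^k = max{a_i, a_{i+1}, …, a_{i+k}}. Assume D ≥ 0 and that a_{i+1+k} ≤ (1/8)·A_i^k + D for every i ≥ 0. Then for every i ≥ k+1, A_i^k ≤ (1/8)^{⌊i/(k+1)⌋} · max{A_0^k, A_1^k, …, A_k^k} + ((8+k)/7)·D. -/

import Mathlib

/-!
Every entry of the window `A i` is controlled, through the recursion, by `A t` for some `t` in
the preceding window `[i - (k+1), i)`, so `A i ≤ A t / 8 + D`. Since `⌊t/(k+1)⌋ ≥ ⌊i/(k+1)⌋ - 1`,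
strong induction gains one factor `1/8` per window length, while the additive part stays below
any `E` with `E / 8 + D ≤ E`, such as `E = (8 + k) D / 7`.
-/

theorem Nat.div_sub_one_le_div_of_sub_le {i t p : ℕ} (h : i - p ≤ t) : i / p - 1 ≤ t / p := by
  calc i / p - 1 = (i - p * 1) / p := (Nat.sub_mul_div i p 1).symm
    _ ≤ t / p := Nat.div_le_div_right (by omega)

theorem le_pow_div_mul_add_of_window_contraction {u : ℕ → ℝ} {p : ℕ} {r M E D : ℝ}
    (hr₀ : 0 ≤ r) (hr₁ : r ≤ 1) (hM : 0 ≤ M) (hE : r * E + D ≤ E)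
    (hinit : ∀ i < p, u i ≤ M + E)
    (hstep : ∀ i, p ≤ i → ∃ t, i - p ≤ t ∧ t < i ∧ u i ≤ r * u t + D) :
    ∀ i, u i ≤ r ^ (i / p) * M + E := by
  intro i
  induction i using Nat.strong_induction_on with
  | _ i ih =>
    rcases lt_or_ge i p with hip | hpi
    · simpa [Nat.div_eq_of_lt hip] using hinit i hip
    obtain ⟨t, hit, hti, hu⟩ := hstep i hpi
    have hq : 1 ≤ i / p := Nat.div_pos hpi (by omega)
    have hdecay : r ^ (t / p) ≤ r ^ (i / p - 1) :=
      pow_le_pow_of_le_one hr₀ hr₁ (Nat.div_sub_one_le_div_of_sub_le hit)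
    have hpow : r ^ (i / p) = r * r ^ (i / p - 1) := by
      rw [← pow_succ']; congr 1; omega
    calc u i ≤ r * u t + D := hu
      _ ≤ r * (r ^ (i / p - 1) * M + E) + D := by
          gcongr
          exact (ih t hti).trans (by gcongr)
      _ ≤ r ^ (i / p) * M + E := by rw [hpow]; linarith

theorem exists_window_step {a A : ℕ → ℝ} {k : ℕ} {r D : ℝ}
    {hne : (Finset.range (k + 1)).Nonempty}
    (hA : ∀ i, A i = (Finset.range (k + 1)).sup' hne (fun j => a (i + j)))
    (hrec : ∀ i, a (i + 1 + k) ≤ r * A i + D) (i : ℕ) (hi : k + 1 ≤ i) :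
    ∃ t, i - (k + 1) ≤ t ∧ t < i ∧ A i ≤ r * A t + D := by
  obtain ⟨j, hj, hmax⟩ := Finset.exists_mem_eq_sup' hne (fun j => a (i + j))
  have hjk : j < k + 1 := Finset.mem_range.mp hj
  refine ⟨i - (k + 1) + j, by omega, by omega, ?_⟩
  rw [hA, hmax, show i + j = i - (k + 1) + j + 1 + k by omega]
  exact hrec _

theorem sequence_decay_lemma_constant_general
    (a : ℕ → ℝ) (ha : ∀ i, 0 ≤ a i) (k : ℕ)
    (A : ℕ → ℝ)
    (hA : ∀ i, A i = (Finset.range (k + 1)).sup'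
      (Finset.nonempty_range_iff.mpr (Nat.succ_ne_zero k)) (fun j => a (i + j)))
    (D : ℝ) (hD : 0 ≤ D)
    (hrec : ∀ i, a (i + 1 + k) ≤ (1/8 : ℝ) * A i + D) :
    ∀ i, k + 1 ≤ i →
      A i ≤ (1/8 : ℝ) ^ (i / (k + 1))
            * (Finset.range (k + 1)).sup'
                (Finset.nonempty_range_iff.mpr (Nat.succ_ne_zero k)) (fun j => A j)
          + ((8 + (k : ℝ)) / 7) * D := by
  intro i _
  have h0 : 0 ∈ Finset.range (k + 1) := Finset.mem_range.mpr k.succ_pos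
  have hE : 0 ≤ ((8 + (k : ℝ)) / 7) * D := by positivity
  have hM : 0 ≤ (Finset.range (k + 1)).sup' _ (fun j => A j) :=
    calc (0 : ℝ) ≤ a 0 := ha 0
      _ ≤ A 0 := by rw [hA]; exact Finset.le_sup' (fun j => a (0 + j)) h0
      _ ≤ _ := Finset.le_sup' (fun j => A j) h0
  refine le_pow_div_mul_add_of_window_contraction (by norm_num) (by norm_num) hM ?_ ?_
    (exists_window_step hA hrec) i
  · nlinarith [k.cast_nonneg (α := ℝ)]
  · intro j hj
    exact le_add_of_le_of_nonneg (Finset.le_sup' (fun j => A j) (Finset.mem_range.mpr hj)) hE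

/-- Let `(a_i)` be a sequence of nonnegative reals, `k ≥ 1`,
and `A i = max {a_i, …, a_{i+k}}`.  If `D ≥ 0` and `a_{i+1+k} ≤ (1/8)·A_i + D` for
all `i`, then for every `i ≥ k+1`,
`A_i ≤ (1/8)^⌊i/(k+1)⌋ · max{A_0, …, A_k} + ((8+k)/7)·D`. -/
theorem sequence_decay_lemma_constant
    (a : ℕ → ℝ) (ha : ∀ i, 0 ≤ a i) (k : ℕ) (hk : 1 ≤ k)
    (A : ℕ → ℝ)
    (hA : ∀ i, A i = (Finset.range (k + 1)).sup'
      (Finset.nonempty_range_iff.mpr (Nat.succ_ne_zero k)) (fun j => a (i + j)))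
    (D : ℝ) (hD : 0 ≤ D)
    (hrec : ∀ i, a (i + 1 + k) ≤ (1/8 : ℝ) * A i + D) :
    ∀ i, k + 1 ≤ i →
      A i ≤ (1/8 : ℝ) ^ (i / (k + 1))
            * (Finset.range (k + 1)).sup'
                (Finset.nonempty_range_iff.mpr (Nat.succ_ne_zero k)) (fun j => A j)
          + ((8 + (k : ℝ)) / 7) * D :=
  sequence_decay_lemma_constant_general a ha k A hA D hD hrec
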